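/- For all reals β ≥ 1, K > 0, and for the three-dimensional cones C_∨ = {(z1,z2,z3) : z3² ≥ √(z1²+z2²)} and the region below the logarithmic cone, the double sum over lattice points Σ_{f ∈ C_∨ ∩ ℤ³, z3(f) ≥ 1} Σ_{g ∈ ℤ³, z3(g) ≤ 0} e^{−β·d(f,g)/K} converges, and tends to 0 as β → ∞. -/

import Mathlib

/-!
Points of the cone satisfy `|z₁|, |z₂| ≤ z₃²`, so there the weight
`sqrtWeight b z = exp (-b (√|z₁| + √|z₂| + √|z₃|))`, which is summable over `ℤ³`, is at least
`exp (-3b z₃)`: it absorbs the polynomially many cone points at each height.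
For `f` in the cone and `g` in the lower half-space, `z₃(f) ≤ d(f, g)` and
`√|mᵢ| ≤ |mᵢ| ≤ ‖m‖` on integers give
`e^{-c d(f,g)} ≤ sqrtWeight (c/6) f * sqrtWeight (c/6) (f - g)`, a summable function of
`(f, f - g)`. Since `d(f, g) ≥ 1`, every term tends to `0` as `c → ∞`, dominated by its value
at `c = 1`.
-/

/-- Lattice points of the upward-opening cone `C_∨ = {z : z₃² ≥ √(z₁²+z₂²)}`
at heights `z₃ ≥ 1`. -/
def coneUp : Set (ℤ × ℤ × ℤ) :=
  {z | Real.sqrt ((z.1 : ℝ) ^ 2 + (z.2.1 : ℝ) ^ 2) ≤ ((z.2.2 : ℝ)) ^ 2 ∧ 1 ≤ z.2.2}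

/-- Lattice points of the lower half-space `{z₃ ≤ 0}`. -/
def lowerHalf : Set (ℤ × ℤ × ℤ) := {z | z.2.2 ≤ 0}

open Real Filter Topology

theorem summable_exp_neg_mul_sqrt_abs {b : ℝ} (hb : 0 < b) :
    Summable fun n : ℤ => exp (-b * √|(n : ℝ)|) := by
  have h_sqrt : Tendsto (fun n : ℤ => √|(n : ℝ)|) cofinite atTop :=
    tendsto_sqrt_atTop.comp (tendsto_norm_cocompact_atTop.comp Int.tendsto_coe_cofinite)
  refine summable_of_isBigO (summable_abs_int_rpow one_lt_two) ?_
  refine ((isLittleO_exp_neg_mul_rpow_atTop hb (-4)).isBigO.comp_tendsto h_sqrt).congr_right ?_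
  intro n
  simp only [Function.comp_apply]
  rw [sqrt_eq_rpow, ← rpow_mul (abs_nonneg _)]
  norm_num

theorem summable_mul_comp_sub {G : Type*} [AddGroup G] {F H : G → ℝ} (hF : Summable F)
    (hH : Summable H) (hF0 : 0 ≤ F) (hH0 : 0 ≤ H) :
    Summable fun p : G × G => F p.1 * H (p.1 - p.2) :=
  (Equiv.prodShear (Equiv.refl G) Equiv.subLeft).summable_iff.mpr
    (hF.mul_of_nonneg hH hF0 hH0)

noncomputable def sqrtWeight (b : ℝ) (z : ℤ × ℤ × ℤ) : ℝ :=
  exp (-b * (√|(z.1 : ℝ)| + √|(z.2.1 : ℝ)| + √|(z.2.2 : ℝ)|))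

theorem sqrtWeight_nonneg (b : ℝ) : 0 ≤ sqrtWeight b := fun _ => (exp_pos _).le

theorem summable_sqrtWeight {b : ℝ} (hb : 0 < b) : Summable (sqrtWeight b) := by
  have hu := summable_exp_neg_mul_sqrt_abs hb
  have hu0 : 0 ≤ fun n : ℤ => exp (-b * √|(n : ℝ)|) := fun _ => (exp_pos _).le
  refine (hu.mul_of_nonneg (hu.mul_of_nonneg hu hu0 hu0) hu0 fun _ => by positivity).congr ?_
  intro z
  simp only [sqrtWeight, ← exp_add]
  ring_nf

theorem sqrt_abs_intCast_le_abs (n : ℤ) : √|(n : ℝ)| ≤ |(n : ℝ)| := by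
  rw [sqrt_le_left (abs_nonneg _)]
  rcases eq_or_ne n 0 with rfl | hn
  · simp
  · exact le_self_pow₀ (by exact_mod_cast Int.one_le_abs hn) two_ne_zero

theorem sqrt_abs_sum_le_three_mul_norm (m : ℤ × ℤ × ℤ) :
    √|(m.1 : ℝ)| + √|(m.2.1 : ℝ)| + √|(m.2.2 : ℝ)| ≤ 3 * ‖m‖ := by
  have h1 : |(m.1 : ℝ)| ≤ ‖m‖ := (Int.norm_eq_abs _).symm.trans_le (norm_fst_le m)
  have h2 : |(m.2.1 : ℝ)| ≤ ‖m‖ :=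
    (Int.norm_eq_abs _).symm.trans_le ((norm_fst_le m.2).trans (norm_snd_le m))
  have h3 : |(m.2.2 : ℝ)| ≤ ‖m‖ :=
    (Int.norm_eq_abs _).symm.trans_le ((norm_snd_le m.2).trans (norm_snd_le m))
  linarith [sqrt_abs_intCast_le_abs m.1, sqrt_abs_intCast_le_abs m.2.1,
    sqrt_abs_intCast_le_abs m.2.2]

theorem sqrt_abs_sum_le_three_mul_height_of_mem_coneUp {f : ℤ × ℤ × ℤ} (hf : f ∈ coneUp) :
    √|(f.1 : ℝ)| + √|(f.2.1 : ℝ)| + √|(f.2.2 : ℝ)| ≤ 3 * f.2.2 := by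
  obtain ⟨hcone, hheight⟩ := hf
  have hpos : (0 : ℝ) ≤ f.2.2 := by exact_mod_cast zero_le_one.trans hheight
  have h1 : √|(f.1 : ℝ)| ≤ f.2.2 := by
    rw [sqrt_le_left hpos, ← sqrt_sq_eq_abs]
    exact (sqrt_le_sqrt (le_add_of_nonneg_right (sq_nonneg _))).trans hcone
  have h2 : √|(f.2.1 : ℝ)| ≤ f.2.2 := by
    rw [sqrt_le_left hpos, ← sqrt_sq_eq_abs]
    exact (sqrt_le_sqrt (le_add_of_nonneg_left (sq_nonneg _))).trans hcone
  have h3 : √|(f.2.2 : ℝ)| ≤ f.2.2 := (sqrt_abs_intCast_le_abs _).trans_eq (abs_of_nonneg hpos)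
  linarith

theorem height_le_dist_of_mem_coneUp {f g : ℤ × ℤ × ℤ} (hf : f ∈ coneUp) (hg : g ∈ lowerHalf) :
    (f.2.2 : ℝ) ≤ dist f g := by
  have hf' : (1 : ℝ) ≤ f.2.2 := by exact_mod_cast hf.2
  have hg' : (g.2.2 : ℝ) ≤ 0 := by exact_mod_cast hg
  calc (f.2.2 : ℝ) ≤ |(f.2.2 : ℝ) - g.2.2| := by rw [abs_of_nonneg] <;> linarith
    _ = dist f.2.2 g.2.2 := (Int.dist_eq _ _).symm
    _ ≤ dist f.2 g.2 := (le_max_right _ _).trans_eq (Prod.dist_eq ..).symm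
    _ ≤ dist f g := (le_max_right _ _).trans_eq (Prod.dist_eq ..).symm

theorem exp_neg_mul_dist_le_sqrtWeight {c : ℝ} (hc : 0 ≤ c) {f g : ℤ × ℤ × ℤ} (hf : f ∈ coneUp)
    (hg : g ∈ lowerHalf) :
    exp (-c * dist f g) ≤ sqrtWeight (c / 6) f * sqrtWeight (c / 6) (f - g) := by
  have hcone := sqrt_abs_sum_le_three_mul_height_of_mem_coneUp hf
  have hdiff := sqrt_abs_sum_le_three_mul_norm (f - g)
  have hheight := height_le_dist_of_mem_coneUp hf hg
  rw [← dist_eq_norm] at hdiff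
  have hsum : (√|(f.1 : ℝ)| + √|(f.2.1 : ℝ)| + √|(f.2.2 : ℝ)|) +
      (√|((f - g).1 : ℝ)| + √|((f - g).2.1 : ℝ)| + √|((f - g).2.2 : ℝ)|) ≤ 6 * dist f g := by
    linarith
  rw [sqrtWeight, sqrtWeight, ← exp_add, exp_le_exp]
  nlinarith [mul_le_mul_of_nonneg_left hsum hc]

theorem summable_exp_neg_mul_dist {c : ℝ} (hc : 0 < c) :
    Summable fun p : coneUp × lowerHalf => exp (-c * dist (p.1 : ℤ × ℤ × ℤ) p.2) := by
  have hc6 : 0 < c / 6 := by positivity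
  have hinj : Function.Injective
      (Prod.map ((↑) : coneUp → ℤ × ℤ × ℤ) ((↑) : lowerHalf → ℤ × ℤ × ℤ)) :=
    Subtype.val_injective.prodMap Subtype.val_injective
  have hW := (summable_mul_comp_sub (summable_sqrtWeight hc6) (summable_sqrtWeight hc6)
    (sqrtWeight_nonneg _) (sqrtWeight_nonneg _)).comp_injective hinj
  refine hW.of_nonneg_of_le (fun _ => (exp_pos _).le) ?_
  rintro ⟨⟨f, hf⟩, ⟨g, hg⟩⟩
  exact exp_neg_mul_dist_le_sqrtWeight hc.le hf hg

theorem tendsto_tsum_exp_neg_mul_dist :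
    Tendsto (fun c : ℝ => ∑' p : coneUp × lowerHalf, exp (-c * dist (p.1 : ℤ × ℤ × ℤ) p.2))
      atTop (𝓝 0) := by
  rw [← tsum_zero]
  refine tendsto_tsum_of_dominated_convergence (summable_exp_neg_mul_dist one_pos) ?_ ?_
  · rintro ⟨⟨f, hf⟩, ⟨g, hg⟩⟩
    have hheight : (1 : ℝ) ≤ f.2.2 := by exact_mod_cast hf.2
    have hdist : 0 < dist f g :=
      zero_lt_one.trans_le (hheight.trans (height_le_dist_of_mem_coneUp hf hg))
    simp_rw [neg_mul_comm]
    exact tendsto_exp_atBot.comp (tendsto_id.atTop_mul_const_of_neg (neg_neg_of_pos hdist))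
  · filter_upwards [eventually_ge_atTop 1] with c hc p
    rw [norm_of_nonneg (exp_pos _).le, exp_le_exp]
    nlinarith [dist_nonneg (x := (p.1 : ℤ × ℤ × ℤ)) (y := p.2)]

/-- Decay of interactions between the cone and the lower half-space: for every `K > 0`,
the double sum `Σ_{f ∈ C_∨, z₃(f) ≥ 1} Σ_{g, z₃(g) ≤ 0} e^{−β·d(f,g)/K}` over lattice
points converges for every `β ≥ 1`, and tends to `0` as `β → ∞`. (Here `d` is the
`ℓ^∞` distance on `ℤ³`.) -/
theorem cone_halfspace_interaction_decay (K : ℝ) (hK : 0 < K) :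
    (∀ β : ℝ, 1 ≤ β →
      Summable (fun p : coneUp × lowerHalf =>
        Real.exp (-β * dist (p.1 : ℤ × ℤ × ℤ) (p.2 : ℤ × ℤ × ℤ) / K))) ∧
    Filter.Tendsto
      (fun β : ℝ => ∑' p : coneUp × lowerHalf,
        Real.exp (-β * dist (p.1 : ℤ × ℤ × ℤ) (p.2 : ℤ × ℤ × ℤ) / K))
      Filter.atTop (nhds 0) := by
  have hrescale : ∀ β : ℝ, (fun p : coneUp × lowerHalf =>
      exp (-β * dist (p.1 : ℤ × ℤ × ℤ) p.2 / K)) =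
        fun p => exp (-(β / K) * dist (p.1 : ℤ × ℤ × ℤ) p.2) := by
    intro β; funext p; ring_nf
  simp_rw [hrescale]
  exact ⟨fun β _ => summable_exp_neg_mul_dist (by positivity),
    tendsto_tsum_exp_neg_mul_dist.comp (tendsto_id.atTop_div_const hK)⟩
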